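/- (Injectivity half of Theorem 1.) For all i ≤ m and j ≤ n, if (i_1,j_1), ..., (i_k,j_k) and (i'_1,j'_1), ..., (i'_k,j'_k) are two antidominant backtraces for (i,j) with [a_{i_1}, ..., a_{i_k}] = [a_{i'_1}, ..., a_{i'_k}], then the two backtraces are equal, i.e., (i_t,j_t) = (i'_t,j'_t) for all 1 ≤ t ≤ k. -/
import Mathlib


/-- `s` is a common subsequence of `A` and `B`. -/
def IsCommonSubseq {α : Type*} (A B s : List α) : Prop :=
  s.Sublist A ∧ s.Sublist B

/-- `lcsL A B i j` is the maximum length of a common subsequence of the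
length-`i` prefix of `A` and the length-`j` prefix of `B`. -/
noncomputable def lcsL {α : Type*} (A B : List α) (i j : ℕ) : ℕ :=
  sSup {k | ∃ s : List α, IsCommonSubseq (A.take i) (B.take j) s ∧ s.length = k}

/-- `s` is a longest common subsequence of the length-`i` prefix of `A` and
the length-`j` prefix of `B`. -/
def IsLCS {α : Type*} (A B : List α) (i j : ℕ) (s : List α) : Prop :=
  IsCommonSubseq (A.take i) (B.take j) s ∧ s.length = lcsL A B i j

/-- The (1-indexed) pair `(i, j)` is a match: `a_i = b_j`. -/
def IsMatch {α : Type*} (A B : List α) (i j : ℕ) : Prop :=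
  1 ≤ i ∧ i ≤ A.length ∧ 1 ≤ j ∧ j ≤ B.length ∧ A[i - 1]? = B[j - 1]?

/-- `e` is an embedding of the list `s` in the pair of prefixes `(A_i, B_j)`:
a sequence of (1-indexed) position pairs, strictly increasing in both
coordinates, lying in `[1..i] × [1..j]`, such that the `t`-th pair points at
occurrences of the `t`-th character of `s` in both strings. -/
def IsEmbedding {α : Type*} (A B : List α) (i j : ℕ) (s : List α)
    (e : List (ℕ × ℕ)) : Prop :=
  e.Chain' (fun u v => u.1 < v.1 ∧ u.2 < v.2) ∧
  (∀ u ∈ e, 1 ≤ u.1 ∧ u.1 ≤ i ∧ 1 ≤ u.2 ∧ u.2 ≤ j) ∧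
  List.Forall₂ (fun (u : ℕ × ℕ) (c : α) =>
    A[u.1 - 1]? = some c ∧ B[u.2 - 1]? = some c) e s

/-- The match `(i, j)` is antidominant of rank `r` within the rectangle
`[1..I] × [1..J]`. -/
def IsAntidominant {α : Type*} (A B : List α) (r I J i j : ℕ) : Prop :=
  IsMatch A B i j ∧ i ≤ I ∧ j ≤ J ∧ lcsL A B i j = r ∧
  ¬ ∃ i' j', IsMatch A B i' j' ∧ lcsL A B i' j' = r ∧
    ((i' = i ∧ j < j' ∧ j' ≤ J) ∨ (j' = j ∧ i < i' ∧ i' ≤ I))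

/-- `e` is an antidominant backtrace for `(i, j)`: a sequence of matches of
length `L(i,j)`, strictly increasing in both coordinates, such that (setting
the `(k+1)`-st entry to `(i+1, j+1)`) the `t`-th match is antidominant of rank
`t` within the rectangle determined by the `(t+1)`-st entry minus one. -/
def IsAntidominantBacktrace {α : Type*} (A B : List α) (i j : ℕ)
    (e : List (ℕ × ℕ)) : Prop :=
  e.length = lcsL A B i j ∧
  e.Chain' (fun u v => u.1 < v.1 ∧ u.2 < v.2) ∧
  ∀ t < e.length,
    IsAntidominant A B (t + 1)
      (((e ++ [(i + 1, j + 1)]).getD (t + 1) (0, 0)).1 - 1)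
      (((e ++ [(i + 1, j + 1)]).getD (t + 1) (0, 0)).2 - 1)
      (e.getD t (0, 0)).1 (e.getD t (0, 0)).2

section Aux

variable {α : Type*}

lemma lcs_bddAbove (A B : List α) (i j : ℕ) :
    BddAbove {k | ∃ s : List α, IsCommonSubseq (A.take i) (B.take j) s ∧ s.length = k} := by
  refine ⟨(A.take i).length, ?_⟩
  rintro k ⟨s, hs, rfl⟩
  exact hs.1.length_le

lemma lcs_nonempty (A B : List α) (i j : ℕ) :
    {k | ∃ s : List α, IsCommonSubseq (A.take i) (B.take j) s ∧ s.length = k}.Nonempty :=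
  ⟨0, [], ⟨List.nil_sublist _, List.nil_sublist _⟩, rfl⟩

lemma exists_lcs (A B : List α) (i j : ℕ) :
    ∃ s : List α, IsCommonSubseq (A.take i) (B.take j) s ∧ s.length = lcsL A B i j :=
  Nat.sSup_mem (lcs_nonempty A B i j) (lcs_bddAbove A B i j)

lemma le_lcsL {A B s : List α} {i j : ℕ} (h : IsCommonSubseq (A.take i) (B.take j) s) :
    s.length ≤ lcsL A B i j :=
  le_csSup (lcs_bddAbove A B i j) ⟨s, h, rfl⟩

lemma lcsL_mono (A B : List α) {i j i' j' : ℕ} (hi : i ≤ i') (hj : j ≤ j') :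
    lcsL A B i j ≤ lcsL A B i' j' := by
  obtain ⟨s, hs, hlen⟩ := exists_lcs A B i j
  rw [← hlen]
  apply le_lcsL
  have hAt : (A.take i).Sublist (A.take i') := by
    rw [show A.take i = (A.take i').take i by rw [List.take_take, min_eq_left hi]]
    exact List.take_sublist _ _
  have hBt : (B.take j).Sublist (B.take j') := by
    rw [show B.take j = (B.take j').take j by rw [List.take_take, min_eq_left hj]]
    exact List.take_sublist _ _
  exact ⟨hs.1.trans hAt, hs.2.trans hBt⟩

lemma lcsL_succ_of_match {A B : List α} {i j : ℕ} (h : IsMatch A B i j) :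
    lcsL A B (i - 1) (j - 1) + 1 ≤ lcsL A B i j := by
  obtain ⟨hi1, hiA, hj1, hjB, hc⟩ := h
  obtain ⟨s, hs, hlen⟩ := exists_lcs A B (i - 1) (j - 1)
  have hiA' : i - 1 < A.length := by omega
  set c := A[i - 1] with hcdef
  have hcA : A[i - 1]? = some c := List.getElem?_eq_getElem hiA'
  have hAeq : A.take i = A.take (i - 1) ++ [c] := by
    conv_lhs => rw [show i = (i - 1) + 1 by omega]
    rw [List.take_succ, hcA]
    rfl
  have hcB : B[j - 1]? = some c := by rw [← hc, hcA]
  have hBeq : B.take j = B.take (j - 1) ++ [c] := by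
    conv_lhs => rw [show j = (j - 1) + 1 by omega]
    rw [List.take_succ, hcB]
    rfl
  have hcs : IsCommonSubseq (A.take i) (B.take j) (s ++ [c]) := by
    constructor
    · rw [hAeq]; exact hs.1.append (List.Sublist.refl _)
    · rw [hBeq]; exact hs.2.append (List.Sublist.refl _)
  have := le_lcsL hcs
  simpa [hlen] using this

lemma key_lt {A B : List α} {r I J i1 j1 i2 j2 : ℕ}
    (hL : lcsL A B I J ≤ r)
    (h1 : IsAntidominant A B r I J i1 j1)
    (h2 : IsAntidominant A B r I J i2 j2)
    (hc : A[i1 - 1]? = A[i2 - 1]?)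
    (hlt : i1 < i2) : False := by
  obtain ⟨hm1, hI1, hJ1, hr1, hn1⟩ := h1
  obtain ⟨hm2, hI2, hJ2, hr2, hn2⟩ := h2
  rcases lt_trichotomy j1 j2 with hj | hj | hj
  · have hmono : lcsL A B i1 j1 ≤ lcsL A B (i2 - 1) (j2 - 1) :=
      lcsL_mono A B (by omega) (by omega)
    have hstep := lcsL_succ_of_match hm2
    omega
  · exact hn1 ⟨i2, j2, hm2, hr2, Or.inr ⟨hj.symm, hlt, hI2⟩⟩
  · obtain ⟨hi11, hi1A, hj11, hj1B, hc1⟩ := hm1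
    obtain ⟨hi21, hi2A, hj21, hj2B, hc2⟩ := hm2
    have hmatch : IsMatch A B i2 j1 := ⟨hi21, hi2A, hj11, hj1B, by rw [← hc, hc1]⟩
    have hub : lcsL A B i2 j1 ≤ lcsL A B I J := lcsL_mono A B hI2 hJ1
    have hlb : lcsL A B i2 j2 ≤ lcsL A B i2 j1 := lcsL_mono A B le_rfl (le_of_lt hj)
    have hrk : lcsL A B i2 j1 = r := by omega
    exact hn2 ⟨i2, j1, hmatch, hrk, Or.inl ⟨rfl, hj, hJ1⟩⟩

lemma antidominant_unique {A B : List α} {r I J i1 j1 i2 j2 : ℕ}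
    (hL : lcsL A B I J ≤ r)
    (h1 : IsAntidominant A B r I J i1 j1)
    (h2 : IsAntidominant A B r I J i2 j2)
    (hc : A[i1 - 1]? = A[i2 - 1]?) :
    (i1, j1) = (i2, j2) := by
  rcases lt_trichotomy i1 i2 with hi | hi | hi
  · exact (key_lt hL h1 h2 hc hi).elim
  · obtain ⟨hm1, hI1, hJ1, hr1, hn1⟩ := h1
    obtain ⟨hm2, hI2, hJ2, hr2, hn2⟩ := h2
    rcases lt_trichotomy j1 j2 with hj | hj | hj
    · exact (hn1 ⟨i2, j2, hm2, hr2, Or.inl ⟨hi.symm, hj, hJ2⟩⟩).elim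
    · rw [hi, hj]
    · exact (hn2 ⟨i1, j1, hm1, hr1, Or.inl ⟨hi, hj, hJ1⟩⟩).elim
  · exact (key_lt hL h2 h1 hc.symm hi).elim

end Aux

theorem stmt_16 {α : Type*} [DecidableEq α] (A B : List α) (m n : ℕ)
    (hA : A.length = m) (hB : B.length = n) (i j : ℕ)
    (him : i ≤ m) (hjn : j ≤ n) (e e' : List (ℕ × ℕ))
    (he : IsAntidominantBacktrace A B i j e)
    (he' : IsAntidominantBacktrace A B i j e')
    (hchars : e.map (fun u => A[u.1 - 1]?) = e'.map (fun u => A[u.1 - 1]?)) :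
    e = e' := by
  obtain ⟨hlen, hchain, hdom⟩ := he
  obtain ⟨hlen', hchain', hdom'⟩ := he'
  have hk : e'.length = e.length := by rw [hlen, hlen']
  have main : ∀ d t, t + d = e.length →
      (e ++ [(i + 1, j + 1)]).getD t (0, 0) = (e' ++ [(i + 1, j + 1)]).getD t (0, 0) := by
    intro d
    induction d with
    | zero =>
      intro t ht
      have ht' : t = e.length := by omega
      subst ht'
      rw [List.getD_append_right _ _ _ _ le_rfl, List.getD_append_right _ _ _ _ (le_of_eq hk)]
      simp [hk]
    | succ d ih =>
      intro t ht
      have htk : t < e.length := by omega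
      have htk' : t < e'.length := by omega
      have hnext := ih (t + 1) (by omega)
      have had := hdom t htk
      have had' := hdom' t htk'
      rw [hnext] at had
      -- characters agree
      have hmape := congrArg (fun l => l[t]?) hchars
      simp only [List.getElem?_map, List.getElem?_eq_getElem htk,
        List.getElem?_eq_getElem htk', Option.map_some] at hmape
      have hchar : A[(e.getD t (0, 0)).1 - 1]? = A[(e'.getD t (0, 0)).1 - 1]? := by
        rw [List.getD_eq_getElem _ _ htk, List.getD_eq_getElem _ _ htk']
        exact Option.some.inj hmape
      -- bound on lcsL of the rectangle
      set p := (e' ++ [(i + 1, j + 1)]).getD (t + 1) (0, 0) with hp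
      have hbound : lcsL A B (p.1 - 1) (p.2 - 1) ≤ t + 1 := by
        rcases eq_or_lt_of_le (show t + 1 ≤ e.length by omega) with heq | hlt2
        · have hpv : p = (i + 1, j + 1) := by
            rw [hp, List.getD_append_right _ _ _ _ (by omega), hk]
            simp [← heq]
          rw [hpv]
          simp only [Nat.add_sub_cancel]
          rw [← hlen]
          omega
        · have htk1' : t + 1 < e'.length := by omega
          have had1' := hdom' (t + 1) htk1'
          have hpv : p = e'.getD (t + 1) (0, 0) := by
            rw [hp, List.getD_append _ _ _ _ htk1']
          obtain ⟨hm, _, _, hr, _⟩ := had1'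
          have := lcsL_succ_of_match hm
          rw [← hpv] at this hr
          omega
      have heqt : ((e.getD t (0, 0)).1, (e.getD t (0, 0)).2)
          = ((e'.getD t (0, 0)).1, (e'.getD t (0, 0)).2) :=
        antidominant_unique hbound had had' hchar
      have heqt' : e.getD t (0, 0) = e'.getD t (0, 0) := by
        have h1 := congrArg Prod.fst heqt
        have h2 := congrArg Prod.snd heqt
        exact Prod.ext h1 h2
      rw [List.getD_append _ _ _ _ htk, List.getD_append _ _ _ _ htk', heqt']
  apply List.ext_getElem hk.symm
  intro t h1 h2
  have := main (e.length - t) t (by omega)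
  rw [List.getD_append _ _ _ _ h1, List.getD_append _ _ _ _ h2,
    List.getD_eq_getElem _ _ h1, List.getD_eq_getElem _ _ h2] at this
  exact this
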